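/- Suppose Assumption 2 holds. Then there exist constants C > 0 and λ ∈ (0,1), depending only on n, w, B, such that for all i ∈ {1,...,n} and all integers t ≥ 2, the broadcast vectors x̂_{i,t} generated by Algorithm 1 satisfy ‖x̂_{i,t} − x̄_t‖ ≤ C λ^{t−2} Σ_{j=1}^n ‖x̂_{j,1}‖ + (1/n) Σ_{j=1}^n ‖ε̂_{j,t−1}‖ + ‖ε̂_{i,t−1}‖ + C Σ_{s=1}^{t−2} λ^{t−s−2} Σ_{j=1}^n ‖ε̂_{j,s}‖, where x̄_t = (1/n) Σ_{j=1}^n x̂_{j,t} and ε̂_{i,s} = x̂_{i,s+1} − z_{i,s+1}. -/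

import Mathlib

/-!
The products `Φ(τ, k) = W (τ + k - 1) ⋯ W τ` are doubly stochastic. Under Assumption 2 the set of
agents reached from `j` grows every `B` steps until it is everything, so every product of
`L = n B` consecutive mixing matrices has all entries at least `η = w ^ L`. A row-stochastic
matrix with entries `≥ η` shrinks zero-sum vectors by the factor `1 - n η ≤ 1 - η`; applied to
the columns of `Φ(τ, k)` minus their mean `1 / n`, this gives `|Φ(τ, k) i j - 1 / n| ≤ C λ ^ k`.
Unrolling `x̂(t + 1) = W t x̂(t) + ε̂(t)` writes `x̂_i(t) - x̄_t` as the matrices `Φ - 1 / n`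
applied to `x̂(1)` and to the `ε̂(s)`, and the bound follows term by term.
-/

open Finset

theorem Relation.ReflTransGen.exists_rel_of_pred_of_not_pred {α : Type*} {r : α → α → Prop}
    {p : α → Prop} {a b : α} (h : Relation.ReflTransGen r a b) (ha : p a) (hb : ¬ p b) :
    ∃ x y, p x ∧ ¬ p y ∧ r x y := by
  induction h with
  | refl => exact absurd ha hb
  | @tail c d _ hcd ih =>
    by_cases hc : p c
    · exact ⟨c, d, hc, hb, hcd⟩
    · exact ih hc

theorem Finset.eq_univ_of_monotone_of_exists_mem_add {α : Type*} [Fintype α] [DecidableEq α]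
    {S : ℕ → Finset α} (hS : Monotone S) (B : ℕ)
    (hgrow : ∀ k, S k ≠ univ → ∃ a ∈ S (k + B), a ∉ S k) :
    S (Fintype.card α * B) = univ := by
  have key : ∀ m, S (m * B) = univ ∨ m ≤ #(S (m * B)) := by
    intro m
    induction m with
    | zero => exact Or.inr (Nat.zero_le _)
    | succ m ih =>
      have hsub : S (m * B) ⊆ S ((m + 1) * B) := hS (Nat.mul_le_mul_right _ m.le_succ)
      by_cases huniv : S (m * B) = univ
      · exact Or.inl (univ_subset_iff.mp (huniv ▸ hsub))
      · obtain ⟨a, ha, ha'⟩ := hgrow _ huniv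
        have hss : S (m * B) ⊂ S ((m + 1) * B) :=
          ssubset_iff_of_subset hsub |>.mpr ⟨a, by rwa [Nat.succ_mul], ha'⟩
        exact Or.inr ((ih.resolve_left huniv).trans_lt (card_lt_card hss))
  exact (key _).elim id fun h => eq_univ_of_card _ (h.antisymm' (card_le_univ _))

theorem norm_sum_smul_le_of_sum_eq_zero {ι E : Type*} [Fintype ι] [SeminormedAddCommGroup E]
    [NormedSpace ℝ E] {P : ι → ℝ} {η D : ℝ} (hP : ∀ j, η ≤ P j) (hP1 : ∑ j, P j = 1)
    {y : ι → E} (hy : ∑ j, y j = 0) (hyD : ∀ j, ‖y j‖ ≤ D) :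
    ‖∑ j, P j • y j‖ ≤ (1 - Fintype.card ι * η) * D := by
  -- subtracting `η • ∑ y = 0` leaves nonnegative weights of total mass `1 - card ι * η`
  have hshift : ∑ j, P j • y j = ∑ j, (P j - η) • y j := by
    simp only [sub_smul, sum_sub_distrib, ← smul_sum, hy, smul_zero, sub_zero]
  calc ‖∑ j, P j • y j‖ ≤ ∑ j, (P j - η) * ‖y j‖ := by
        rw [hshift]
        refine (norm_sum_le _ _).trans_eq (sum_congr rfl fun j _ => ?_)
        rw [norm_smul, Real.norm_of_nonneg (sub_nonneg.mpr (hP j))]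
    _ ≤ ∑ j, (P j - η) * D :=
        sum_le_sum fun j _ => mul_le_mul_of_nonneg_left (hyD j) (sub_nonneg.mpr (hP j))
    _ = (1 - Fintype.card ι * η) * D := by
        rw [← sum_mul, sum_sub_distrib, hP1, sum_const, card_univ, nsmul_eq_mul]

theorem norm_sum_smul_le_of_abs_le {ι E : Type*} [Fintype ι] [SeminormedAddCommGroup E]
    [NormedSpace ℝ E] {a : ι → ℝ} {c : ℝ} (ha : ∀ j, |a j| ≤ c) (v : ι → E) :
    ‖∑ j, a j • v j‖ ≤ c * ∑ j, ‖v j‖ := by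
  rw [mul_sum]
  refine (norm_sum_le _ _).trans (sum_le_sum fun j _ => ?_)
  rw [norm_smul, Real.norm_eq_abs]
  exact mul_le_mul_of_nonneg_right (ha j) (norm_nonneg _)

namespace Matrix

variable {ι R : Type*} [Fintype ι]

theorem abs_mul_apply_sub_inv_card_le {P Q : Matrix ι ι ℝ} {η D : ℝ} (hP : ∀ i j, η ≤ P i j)
    (hProw : ∀ i, ∑ j, P i j = 1) {c : ι} (hQcol : ∑ i, Q i c = 1)
    (hQ : ∀ i, |Q i c - (Fintype.card ι : ℝ)⁻¹| ≤ D) (i : ι) :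
    |(P * Q) i c - (Fintype.card ι : ℝ)⁻¹| ≤ (1 - Fintype.card ι * η) * D := by
  have : Nonempty ι := ⟨i⟩
  have hcard : (Fintype.card ι : ℝ) ≠ 0 := Nat.cast_ne_zero.mpr Fintype.card_ne_zero
  have hcentered : (P * Q) i c - (Fintype.card ι : ℝ)⁻¹ =
      ∑ j, P i j * (Q j c - (Fintype.card ι : ℝ)⁻¹) := by
    simp only [mul_apply, mul_sub, sum_sub_distrib, ← sum_mul, hProw, one_mul]
  have hsum : ∑ j, (Q j c - (Fintype.card ι : ℝ)⁻¹) = 0 := by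
    rw [sum_sub_distrib, hQcol, sum_const, card_univ, nsmul_eq_mul, mul_inv_cancel₀ hcard,
      sub_self]
  rw [hcentered, ← Real.norm_eq_abs]
  exact norm_sum_smul_le_of_sum_eq_zero (hP i) (hProw i) hsum hQ

theorem sum_mul_apply_smul {E : Type*} [AddCommGroup E] [Semiring R] [Module R E]
    (A B : Matrix ι ι R) (v : ι → E) (i : ι) :
    ∑ j, (A * B) i j • v j = ∑ l, A i l • ∑ j, B l j • v j := by
  simp only [mul_apply, sum_smul, smul_sum, smul_smul]
  exact sum_comm

variable [DecidableEq ι]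

/-- `transition W τ k = W (τ + k - 1) * ⋯ * W (τ + 1) * W τ`. -/
def transition [Semiring R] (W : ℕ → Matrix ι ι R) (τ : ℕ) : ℕ → Matrix ι ι R
  | 0 => 1
  | k + 1 => W (τ + k) * transition W τ k

section Semiring

variable [Semiring R] {W : ℕ → Matrix ι ι R}

@[simp]
theorem transition_zero (τ : ℕ) : transition W τ 0 = 1 := rfl

theorem transition_succ (τ k : ℕ) : transition W τ (k + 1) = W (τ + k) * transition W τ k := rfl

theorem transition_add (τ k l : ℕ) :
    transition W τ (k + l) = transition W (τ + k) l * transition W τ k := by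
  induction l with
  | zero => simp
  | succ l ih => rw [← add_assoc, transition_succ, ih, transition_succ, add_assoc, Matrix.mul_assoc]

theorem transition_succ' (τ k : ℕ) : transition W τ (k + 1) = transition W (τ + 1) k * W τ := by
  rw [add_comm k, transition_add, transition_succ, transition_zero, Matrix.mul_one, add_zero]

theorem transition_mem {S : Submonoid (Matrix ι ι R)} (hW : ∀ t, W t ∈ S) (τ k : ℕ) :
    transition W τ k ∈ S := by
  induction k with
  | zero => exact S.one_mem
  | succ k ih => exact S.mul_mem (hW _) ih

end Semiring

section Real

variable {W : ℕ → Matrix ι ι ℝ}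

theorem transition_nonneg (hW : ∀ t i j, 0 ≤ W t i j) (τ k : ℕ) (i j : ι) :
    0 ≤ transition W τ k i j := by
  induction k generalizing i with
  | zero => by_cases h : i = j <;> simp [h]
  | succ k ih => exact sum_nonneg fun _ _ => mul_nonneg (hW _ _ _) (ih _)

theorem transition_succ_apply_pos (hW : ∀ t i j, 0 ≤ W t i j) {τ k : ℕ} {a b j : ι}
    (ha : 0 < transition W τ k a j) (hba : 0 < W (τ + k) b a) :
    0 < transition W τ (k + 1) b j :=
  (mul_pos hba ha).trans_le <| single_le_sum (f := fun c => W (τ + k) b c * transition W τ k c j)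
    (fun _ _ => mul_nonneg (hW _ _ _) (transition_nonneg hW _ _ _ _)) (mem_univ a)

theorem pow_le_transition_apply {w : ℝ} (hw0 : 0 ≤ w) (hW : ∀ t i j, 0 ≤ W t i j)
    (hw : ∀ t i j, 0 < W t i j → w ≤ W t i j) {τ k : ℕ} {i j : ι}
    (hpos : 0 < transition W τ k i j) : w ^ k ≤ transition W τ k i j := by
  induction k generalizing i with
  | zero => by_cases h : i = j <;> simp_all
  | succ k ih =>
    rw [transition_succ, mul_apply] at hpos ⊢
    obtain ⟨m, -, hm⟩ := (sum_pos_iff_of_nonneg fun c _ =>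
      mul_nonneg (hW _ _ _) (transition_nonneg hW τ k c j)).mp hpos
    have hΦ := pos_of_mul_pos_right hm (hW _ _ _)
    calc w ^ (k + 1) = w * w ^ k := pow_succ' w k
      _ ≤ W (τ + k) i m * transition W τ k m j :=
        mul_le_mul (hw _ _ _ (pos_of_mul_pos_left hm hΦ.le)) (ih hΦ) (pow_nonneg hw0 k) (hW _ _ _)
      _ ≤ _ := single_le_sum (f := fun c => W (τ + k) i c * transition W τ k c j)
        (fun c _ => mul_nonneg (hW _ _ _) (transition_nonneg hW _ _ _ _)) (mem_univ m)

theorem transition_pos {B : ℕ} (hW : ∀ t i j, 0 ≤ W t i j) (hdiag : ∀ t i, 0 < W t i i)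
    (hconn : ∀ t (i j : ι),
      Relation.ReflTransGen (fun a b => ∃ l, l < B ∧ 0 < W (t + l) b a) i j)
    (τ : ℕ) (i j : ι) : 0 < transition W τ (Fintype.card ι * B) i j := by
  set T : ℕ → Finset ι := fun k => {m | 0 < transition W τ k m j}
  have hmem : ∀ k m, m ∈ T k ↔ 0 < transition W τ k m j := by simp [T]
  have hstep : ∀ {k a b}, a ∈ T k → 0 < W (τ + k) b a → b ∈ T (k + 1) := fun ha hba =>
    (hmem _ _).mpr (transition_succ_apply_pos hW ((hmem _ _).mp ha) hba)
  have hmono : Monotone T := monotone_nat_of_le_succ fun k a ha => hstep ha (hdiag _ _)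
  have hj : j ∈ T 0 := by simp [hmem]
  have hfull := eq_univ_of_monotone_of_exists_mem_add hmono B fun k hk => by
    obtain ⟨b, hb⟩ : ∃ b, b ∉ T k := by simpa [eq_univ_iff_forall] using hk
    obtain ⟨a, c, ha, hc, l, hl, hca⟩ :=
      (hconn (τ + k) j b).exists_rel_of_pred_of_not_pred (p := (· ∈ T k)) (hmono k.zero_le hj) hb
    rw [add_assoc] at hca
    exact ⟨c, hmono (by omega) (hstep (hmono (k.le_add_right l) ha) hca), hc⟩
  exact (hmem _ i).mp (hfull ▸ mem_univ i)

theorem abs_transition_sub_inv_card_le_pow {w : ℝ} (hw0 : 0 ≤ w) (hw1 : w ≤ 1) {B : ℕ}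
    (hW : ∀ t, W t ∈ doublyStochastic ℝ ι) (hw : ∀ t i j, 0 < W t i j → w ≤ W t i j)
    (hdiag : ∀ t i, 0 < W t i i)
    (hconn : ∀ t (i j : ι),
      Relation.ReflTransGen (fun a b => ∃ l, l < B ∧ 0 < W (t + l) b a) i j)
    (τ r m : ℕ) (i j : ι) :
    |transition W τ (r + m * (Fintype.card ι * B)) i j - (Fintype.card ι : ℝ)⁻¹| ≤
      (1 - w ^ (Fintype.card ι * B)) ^ m := by
  have : Nonempty ι := ⟨i⟩
  have hW0 : ∀ t i j, 0 ≤ W t i j := fun t _ _ => nonneg_of_mem_doublyStochastic (hW t)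
  have hΦ := transition_mem (S := doublyStochastic ℝ ι) hW
  have hn : (1 : ℝ) ≤ Fintype.card ι := by exact_mod_cast Fintype.card_pos
  set L := Fintype.card ι * B
  induction m generalizing i with
  | zero =>
    have h0 := nonneg_of_mem_doublyStochastic (hΦ τ r) (i := i) (j := j)
    have h1 := le_one_of_mem_doublyStochastic (hΦ τ r) (i := i) (j := j)
    simp only [zero_mul, add_zero, pow_zero, abs_sub_le_iff]
    constructor <;> linarith [inv_pos.mpr (zero_lt_one.trans_le hn), inv_le_one_of_one_le₀ hn]
  | succ m ih =>
    have hη : ∀ a b, w ^ L ≤ transition W (τ + (r + m * L)) L a b := fun a b =>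
      pow_le_transition_apply hw0 hW0 hw (transition_pos hW0 hdiag hconn _ a b)
    rw [show r + (m + 1) * L = r + m * L + L by ring, transition_add]
    refine (abs_mul_apply_sub_inv_card_le hη (sum_row_of_mem_doublyStochastic (hΦ _ _))
      (sum_col_of_mem_doublyStochastic (hΦ _ _) j) ih i).trans ?_
    rw [pow_succ']
    refine mul_le_mul_of_nonneg_right ?_ (pow_nonneg (sub_nonneg.mpr (pow_le_one₀ hw0 hw1)) m)
    nlinarith [pow_nonneg hw0 L]

theorem exists_abs_transition_sub_inv_card_le [Nonempty ι] {w : ℝ} (hw0 : 0 < w) (hw1 : w < 1)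
    {B : ℕ} (hB : 0 < B) :
    ∃ C > 0, ∃ lam : ℝ, 0 < lam ∧ lam < 1 ∧ ∀ W : ℕ → Matrix ι ι ℝ,
      (∀ t, W t ∈ doublyStochastic ℝ ι) → (∀ t i j, 0 < W t i j → w ≤ W t i j) →
      (∀ t i, 0 < W t i i) →
      (∀ t (i j : ι), Relation.ReflTransGen (fun a b => ∃ l, l < B ∧ 0 < W (t + l) b a) i j) →
      ∀ τ k i j, |transition W τ k i j - (Fintype.card ι : ℝ)⁻¹| ≤ C * lam ^ k := by
  set L := Fintype.card ι * B
  have hL : 0 < L := Nat.mul_pos Fintype.card_pos hB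
  set ρ := 1 - w ^ L
  have hρ0 : 0 < ρ := sub_pos.mpr (pow_lt_one₀ hw0.le hw1 hL.ne')
  have hρ1 : ρ < 1 := sub_lt_self 1 (pow_pos hw0 L)
  -- one block of `L` steps contracts by `ρ`, so per step the rate is `ρ ^ (1 / L)`
  set lam := ρ ^ (L : ℝ)⁻¹
  have hlam0 : 0 < lam := Real.rpow_pos_of_pos hρ0 _
  have hlamL : lam ^ L = ρ := Real.rpow_inv_natCast_pow hρ0.le hL.ne'
  have hlam1 : lam < 1 := Real.rpow_lt_one hρ0.le hρ1 (by positivity)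
  refine ⟨ρ⁻¹, inv_pos.mpr hρ0, lam, hlam0, hlam1, fun W hW hw hdiag hconn τ k i j => ?_⟩
  calc |transition W τ k i j - (Fintype.card ι : ℝ)⁻¹|
      = |transition W τ (k % L + k / L * L) i j - (Fintype.card ι : ℝ)⁻¹| := by
        rw [Nat.mod_add_div']
    _ ≤ ρ ^ (k / L) :=
        abs_transition_sub_inv_card_le_pow hw0.le hw1.le hW hw hdiag hconn τ _ _ i j
    _ = ρ⁻¹ * lam ^ (L * (k / L + 1)) := by
        rw [pow_mul, hlamL, pow_succ, mul_comm, mul_assoc, mul_inv_cancel₀ hρ0.ne', mul_one]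
    _ ≤ ρ⁻¹ * lam ^ k :=
        mul_le_mul_of_nonneg_left (pow_le_pow_of_le_one hlam0.le hlam1.le
          (Nat.lt_mul_div_succ k hL).le) (inv_pos.mpr hρ0).le

end Real

section Unroll

variable {E : Type*} [AddCommGroup E]

theorem eq_sum_transition_smul_add [Semiring R] [Module R E] {W : ℕ → Matrix ι ι R}
    {x e : ι → ℕ → E} {τ : ℕ} (hx : ∀ t, τ ≤ t → ∀ i, x i (t + 1) = ∑ j, W t i j • x j t + e i t)
    (k : ℕ) (i : ι) :
    x i (τ + k) = ∑ j, transition W τ k i j • x j τ +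
      ∑ s ∈ range k, ∑ j, transition W (τ + s + 1) (k - (s + 1)) i j • e j (τ + s) := by
  induction k generalizing τ i with
  | zero => simp [one_apply]
  | succ k ih =>
    have hx' : ∀ t, τ + 1 ≤ t → ∀ i, x i (t + 1) = ∑ j, W t i j • x j t + e i t :=
      fun t ht => hx t (by omega)
    rw [← add_assoc, add_right_comm, ih hx' i, sum_range_succ', transition_succ',
      sum_mul_apply_smul]
    simp only [hx τ le_rfl, smul_add, sum_add_distrib, add_zero, Nat.add_sub_add_right,
      Nat.sub_zero, ← add_assoc, add_right_comm τ 1]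
    abel

theorem sub_inv_card_smul_sum_eq [Module ℝ E] {W : ℕ → Matrix ι ι ℝ}
    (hW : ∀ t, W t ∈ colStochastic ℝ ι) {x e : ι → ℕ → E} {τ : ℕ}
    (hx : ∀ t, τ ≤ t → ∀ i, x i (t + 1) = ∑ j, W t i j • x j t + e i t) (k : ℕ) (i : ι) :
    x i (τ + k) - (Fintype.card ι : ℝ)⁻¹ • ∑ j, x j (τ + k) =
      ∑ j, (transition W τ k i j - (Fintype.card ι : ℝ)⁻¹) • x j τ +
      ∑ s ∈ range k, ∑ j,
        (transition W (τ + s + 1) (k - (s + 1)) i j - (Fintype.card ι : ℝ)⁻¹) • e j (τ + s) := by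
  have hcol : ∀ τ' k' (v : ι → E), ∑ i, ∑ j, transition W τ' k' i j • v j = ∑ j, v j :=
    fun τ' k' v => by
      rw [sum_comm]
      simp only [← sum_smul, sum_col_of_mem_colStochastic (transition_mem hW τ' k'), one_smul]
  have hmean : ∑ j, x j (τ + k) = ∑ j, x j τ + ∑ s ∈ range k, ∑ j, e j (τ + s) := by
    simp only [eq_sum_transition_smul_add hx k, sum_add_distrib, hcol]
    rw [sum_comm]
    simp only [hcol]
  rw [eq_sum_transition_smul_add hx k i, hmean]
  simp only [sub_smul, sum_sub_distrib, smul_add, smul_sum]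
  abel

theorem sum_one_sub_smul [Ring R] [Module R E] (c : R) (v : ι → E) (i : ι) :
    ∑ j, ((1 : Matrix ι ι R) i j - c) • v j = v i - c • ∑ j, v j := by
  simp [sub_smul, one_apply, sum_sub_distrib, smul_sum]

end Unroll

theorem norm_sub_inv_card_smul_sum_le {E : Type*} [SeminormedAddCommGroup E] [NormedSpace ℝ E]
    {W : ℕ → Matrix ι ι ℝ} (hW : ∀ t, W t ∈ colStochastic ℝ ι) {C lam : ℝ} (hC : 0 ≤ C)
    (hlam0 : 0 ≤ lam) (hlam1 : lam ≤ 1)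
    (hdecay : ∀ τ k i j, |transition W τ k i j - (Fintype.card ι : ℝ)⁻¹| ≤ C * lam ^ k)
    {x e : ι → ℕ → E} (hx : ∀ t, 1 ≤ t → ∀ i, x i (t + 1) = ∑ j, W t i j • x j t + e i t)
    (k : ℕ) (i : ι) :
    ‖x i (k + 2) - (Fintype.card ι : ℝ)⁻¹ • ∑ j, x j (k + 2)‖ ≤
      C * lam ^ k * ∑ j, ‖x j 1‖ + (Fintype.card ι : ℝ)⁻¹ * ∑ j, ‖e j (k + 1)‖ +
        ‖e i (k + 1)‖ + C * ∑ s ∈ Icc 1 k, lam ^ (k - s) * ∑ j, ‖e j s‖ := by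
  have hbound : ∀ τ k m i j, m ≤ k →
      |transition W τ k i j - (Fintype.card ι : ℝ)⁻¹| ≤ C * lam ^ m := fun τ k m i j hmk =>
    (hdecay τ k i j).trans (mul_le_mul_of_nonneg_left (pow_le_pow_of_le_one hlam0 hlam1 hmk) hC)
  have hdev := sub_inv_card_smul_sum_eq hW hx (k + 1) i
  rw [show 1 + (k + 1) = k + 2 by ring, sum_range_succ, Nat.sub_self, transition_zero,
    sum_one_sub_smul, add_comm 1 k] at hdev
  have hinit := norm_sum_smul_le_of_abs_le (fun j => hbound 1 (k + 1) k i j k.le_succ)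
    (fun j => x j 1)
  have hpast : ‖∑ s ∈ range k, ∑ j, (transition W (1 + s + 1) (k + 1 - (s + 1)) i j -
      (Fintype.card ι : ℝ)⁻¹) • e j (1 + s)‖ ≤
      C * ∑ s ∈ Icc 1 k, lam ^ (k - s) * ∑ j, ‖e j s‖ :=
    calc _ ≤ ∑ s ∈ range k, C * lam ^ (k - (1 + s)) * ∑ j, ‖e j (1 + s)‖ :=
          (norm_sum_le _ _).trans <| sum_le_sum fun s _ =>
            norm_sum_smul_le_of_abs_le (fun j => hbound _ _ _ i j (by omega)) _
      _ = _ := by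
          rw [mul_sum, ← Ico_add_one_right_eq_Icc, sum_Ico_eq_sum_range, Nat.add_sub_cancel]
          simp only [mul_assoc]
  have hlast : ‖e i (k + 1) - (Fintype.card ι : ℝ)⁻¹ • ∑ j, e j (k + 1)‖ ≤
      ‖e i (k + 1)‖ + (Fintype.card ι : ℝ)⁻¹ * ∑ j, ‖e j (k + 1)‖ := by
    refine (norm_sub_le _ _).trans (add_le_add_right ?_ _)
    rw [norm_smul, Real.norm_of_nonneg (by positivity)]
    exact mul_le_mul_of_nonneg_left (norm_sum_le _ _) (by positivity)
  rw [hdev]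
  refine (norm_add_le _ _).trans ((add_le_add_right (norm_add_le _ _) _).trans ?_)
  linarith

end Matrix

/-- Lemma 1 of the paper: disagreement bound for the consensus step. There are
constants `C > 0` and `lam ∈ (0,1)`, depending only on `n`, `w`, `B`, such that
the broadcast vectors satisfy the stated geometric disagreement estimate, where
`x̄_t = (1/n) Σ_j x̂_{j,t}` and `ε̂_{i,s} = x̂_{i,s+1} − z_{i,s+1}`. -/
theorem lemma1_disagreement (n : ℕ) (hn : 0 < n) (w : ℝ) (hw0 : 0 < w) (hw1 : w < 1)
    (B : ℕ) (hB : 0 < B) :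
    ∃ C > 0, ∃ lam : ℝ, 0 < lam ∧ lam < 1 ∧
      ∀ (p : ℕ) (W : ℕ → Fin n → Fin n → ℝ)
        (xhat z : Fin n → ℕ → EuclideanSpace ℝ (Fin p)),
        (∀ t i j, 0 ≤ W t i j) →
        (∀ t i, 0 < W t i i) →
        (∀ t i j, 0 < W t i j → w ≤ W t i j) →
        (∀ t i, ∑ j, W t i j = 1) →
        (∀ t j, ∑ i, W t i j = 1) →
        (∀ t (i j : Fin n),
          Relation.ReflTransGen (fun a b => ∃ l, l < B ∧ 0 < W (t + l) b a) i j) →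
        (∀ i t, 1 ≤ t → z i (t + 1) = ∑ j, W t i j • xhat j t) →
        ∀ (i : Fin n) (t : ℕ), 2 ≤ t →
          ‖xhat i t - (n : ℝ)⁻¹ • ∑ j, xhat j t‖ ≤
            C * lam ^ (t - 2) * ∑ j, ‖xhat j 1‖ +
            (1 / (n : ℝ)) * ∑ j, ‖xhat j t - z j t‖ +
            ‖xhat i t - z i t‖ +
            C * ∑ s ∈ Finset.Icc 1 (t - 2),
              lam ^ (t - s - 2) * ∑ j, ‖xhat j (s + 1) - z j (s + 1)‖ := by
  have : Nonempty (Fin n) := ⟨⟨0, hn⟩⟩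
  obtain ⟨C, hC, lam, hlam0, hlam1, hdecay⟩ :=
    Matrix.exists_abs_transition_sub_inv_card_le (ι := Fin n) hw0 hw1 hB
  refine ⟨C, hC, lam, hlam0, hlam1, fun p (W : ℕ → Matrix (Fin n) (Fin n) ℝ) xhat z hW0 hdiag hw
    hrow hcol hconn hz i t ht => ?_⟩
  have hW : ∀ t, W t ∈ doublyStochastic ℝ (Fin n) := fun t =>
    mem_doublyStochastic_iff_sum.mpr ⟨hW0 t, hrow t, hcol t⟩
  obtain ⟨k, rfl⟩ : ∃ k, t = k + 2 := ⟨t - 2, by omega⟩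
  have key := Matrix.norm_sub_inv_card_smul_sum_le
    (fun t => (mem_doublyStochastic_iff_mem_rowStochastic_and_mem_colStochastic.mp (hW t)).2)
    hC.le hlam0.le hlam1.le (hdecay W hW hw hdiag hconn)
    (x := xhat) (e := fun j s => xhat j (s + 1) - z j (s + 1)) (fun t ht i => by simp [hz i t ht])
    k i
  simp only [Fintype.card_fin] at key
  rw [Nat.add_sub_cancel, one_div]
  convert key using 6
  omega
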